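/- Spectral concentration of block-sampled Gram matrix: let V ∈ ℝ^{n×k} have orthonormal columns, partition [n] into G blocks with V_{(i)} = E_i^T V the i-th row-block of V, and sample g blocks i.i.d. with probabilities p_i = ||V_{(i)}||_F^2 / k. Let α = min_i ||V_{(i)}||_F^2/||V_{(i)}||_2^2 (over blocks with V_{(i)} ≠ 0). Then for any δ ∈ (0,1), with probability at least 1 − δ, ||I_k − V^T S S^T V||_2 ≤ k / (δ sqrt(α g)), where S is the block sampling/rescaling matrix. -/

import Mathlib

open Matrix Finset
open scoped Classical
noncomputable section
/-- Squared Frobenius norm. -/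
def frobSq {m n : Type*} [Fintype m] [Fintype n] (A : Matrix m n ℝ) : ℝ := ∑ i, ∑ j, (A i j)^2
/-- Frobenius norm. -/
def frob {m n : Type*} [Fintype m] [Fintype n] (A : Matrix m n ℝ) : ℝ := Real.sqrt (frobSq A)
/-- Spectral (operator) norm. -/
def specNorm {m n : Type*} [Fintype m] [Fintype n] [DecidableEq n] (A : Matrix m n ℝ) : ℝ :=
  ‖LinearMap.toContinuousLinearMap (Matrix.toEuclideanLin A)‖
/-- Moore-Penrose pseudoinverse, via the four Penrose conditions. -/
def IsPinv {m n : Type*} [Fintype m] [Fintype n] (M : Matrix m n ℝ) (P : Matrix n m ℝ) : Prop :=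
  M * P * M = M ∧ P * M * P = P ∧ (M * P)ᵀ = M * P ∧ (P * M)ᵀ = P * M

/-! The sampled matrix `∑ₜ (g p_{jₜ})⁻¹ V_{jₜ}ᵀ V_{jₜ}` is a sum of `g` i.i.d. copies of a random
matrix with mean `g⁻¹ I`, so its expected squared Frobenius distance to `I` is at most `g` times the
second moment of one copy. By `‖VᵀV‖_F ≤ ‖V‖₂ ‖V‖_F` and `p_i = ‖V_i‖_F² / k` that moment is at most
`(k / g²) ∑ᵢ ‖V_i‖₂² ≤ k² / (g² α)`. As `‖·‖₂ ≤ ‖·‖_F`, Markov's inequality bounds the probability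
that `‖I - V^T S S^T V‖₂ > k / (δ √(α g))` by `δ²`. -/

section FrobeniusSpectral
open scoped Matrix.Norms.L2Operator
variable {l m n : Type*} [Fintype l] [Fintype m] [Fintype n]

lemma frobSq_nonneg (A : Matrix m n ℝ) : 0 ≤ frobSq A := by
  unfold frobSq; positivity

lemma frobSq_eq_zero_iff {A : Matrix m n ℝ} : frobSq A = 0 ↔ A = 0 := by
  have hrow (i : m) : ∑ j, A i j ^ 2 = 0 ↔ ∀ j, A i j = 0 := by
    simp [Finset.sum_eq_zero_iff_of_nonneg fun j _ => sq_nonneg (A i j)]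
  rw [frobSq,
    Finset.sum_eq_zero_iff_of_nonneg fun i _ => Finset.sum_nonneg fun j _ => sq_nonneg (A i j)]
  simp [hrow, ← Matrix.ext_iff]

lemma frobSq_pos {A : Matrix m n ℝ} (hA : A ≠ 0) : 0 < frobSq A :=
  (frobSq_nonneg A).lt_of_ne (Ne.symm (frobSq_eq_zero_iff.not.mpr hA))

lemma frobSq_smul (c : ℝ) (A : Matrix m n ℝ) : frobSq (c • A) = c ^ 2 * frobSq A := by
  simp [frobSq, Finset.mul_sum, mul_pow]

lemma frobSq_eq_trace (A : Matrix m n ℝ) : frobSq A = (Aᵀ * A).trace := by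
  simp only [frobSq, Matrix.trace, Matrix.diag, Matrix.mul_apply, Matrix.transpose_apply, sq]
  exact Finset.sum_comm

lemma specNorm_zero [DecidableEq n] : specNorm (0 : Matrix m n ℝ) = 0 := by
  simp [specNorm]

lemma specNorm_pos [DecidableEq n] {A : Matrix m n ℝ} (hA : A ≠ 0) : 0 < specNorm A := by
  show 0 < ‖A‖
  exact norm_pos_iff.mpr hA

lemma specNorm_transpose [DecidableEq m] [DecidableEq n] (A : Matrix m n ℝ) :
    specNorm Aᵀ = specNorm A :=
  Matrix.l2_opNorm_conjTranspose A

lemma specNorm_sq_le_frobSq [DecidableEq n] (A : Matrix m n ℝ) : specNorm A ^ 2 ≤ frobSq A := by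
  suffices specNorm A ≤ √(frobSq A) from
    (pow_le_pow_left₀ (norm_nonneg _) this 2).trans (Real.sq_sqrt (frobSq_nonneg A)).le
  refine ContinuousLinearMap.opNorm_le_bound _ (by positivity) fun x => ?_
  rw [← Real.sqrt_sq (norm_nonneg _), ← Real.sqrt_sq (norm_nonneg x),
    ← Real.sqrt_mul (frobSq_nonneg A)]
  refine Real.sqrt_le_sqrt ?_
  rw [EuclideanSpace.real_norm_sq_eq, EuclideanSpace.real_norm_sq_eq, frobSq, Finset.sum_mul]
  exact Finset.sum_le_sum fun i _ => Finset.sum_mul_sq_le_sq_mul_sq _ _ _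

lemma frobSq_mul_le [DecidableEq m] (B : Matrix l m ℝ) (A : Matrix m n ℝ) :
    frobSq (B * A) ≤ specNorm B ^ 2 * frobSq A := by
  have hcol (j : n) : ∑ i, ((B * A) i j) ^ 2 ≤ specNorm B ^ 2 * ∑ i, (A i j) ^ 2 := by
    have h := Matrix.l2_opNorm_mulVec B (WithLp.toLp 2 fun i => A i j)
    have h2 := pow_le_pow_left₀ (norm_nonneg _) h 2
    rwa [mul_pow, EuclideanSpace.real_norm_sq_eq, EuclideanSpace.real_norm_sq_eq] at h2
  calc frobSq (B * A) = ∑ j, ∑ i, ((B * A) i j) ^ 2 := Finset.sum_comm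
    _ ≤ ∑ j, specNorm B ^ 2 * ∑ i, (A i j) ^ 2 := Finset.sum_le_sum fun j _ => hcol j
    _ = specNorm B ^ 2 * frobSq A := by rw [← Finset.mul_sum, frobSq, Finset.sum_comm]

end FrobeniusSpectral

section IidSampling
variable {ι α : Type*} [Fintype ι] [DecidableEq ι] [Fintype α] {p : α → ℝ}

lemma sum_prod_eq_one (hp : ∑ a, p a = 1) : ∑ ω : ι → α, ∏ t, p (ω t) = 1 := by
  rw [← Fintype.prod_sum (fun _ a => p a), hp, Finset.prod_const_one]

lemma sum_prod_mul_mul_of_sum_mul_eq_zero (hp : ∑ a, p a = 1) {h : α → ℝ}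
    (hmean : ∑ a, p a * h a = 0) (t t' : ι) :
    ∑ ω : ι → α, (∏ s, p (ω s)) * (h (ω t) * h (ω t')) =
      if t = t' then ∑ a, p a * h a ^ 2 else 0 := by
  -- Writing the integrand as a product of one factor per coordinate lets the sum over `ω` factorize.
  let u (s : ι) (a : α) : ℝ := p a * ((if s = t then h a else 1) * (if s = t' then h a else 1))
  have hprod (ω : ι → α) : (∏ s, p (ω s)) * (h (ω t) * h (ω t')) = ∏ s, u s (ω s) := by
    simp only [u, Finset.prod_mul_distrib, Finset.prod_ite_eq', Finset.mem_univ, if_true]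
  simp_rw [hprod, ← Fintype.prod_sum u]
  split_ifs with htt
  · subst htt
    rw [Fintype.prod_eq_single t fun s hs => by simp [u, hs, hp]]
    simp [u, sq]
  · exact Finset.prod_eq_zero (Finset.mem_univ t) (by simpa [u, htt] using hmean)

lemma sum_prod_mul_sum_sq_of_sum_mul_eq_zero (hp : ∑ a, p a = 1) {h : α → ℝ}
    (hmean : ∑ a, p a * h a = 0) :
    ∑ ω : ι → α, (∏ s, p (ω s)) * (∑ t, h (ω t)) ^ 2 =
      Fintype.card ι * ∑ a, p a * h a ^ 2 := by
  calc ∑ ω : ι → α, (∏ s, p (ω s)) * (∑ t, h (ω t)) ^ 2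
      = ∑ t, ∑ t', ∑ ω : ι → α, (∏ s, p (ω s)) * (h (ω t) * h (ω t')) := by
        simp_rw [sq, Finset.sum_mul_sum, Finset.mul_sum]
        rw [Finset.sum_comm]
        exact Finset.sum_congr rfl fun t _ => Finset.sum_comm
    _ = Fintype.card ι * ∑ a, p a * h a ^ 2 := by
        simp [sum_prod_mul_mul_of_sum_mul_eq_zero hp hmean]

lemma sum_prod_mul_card_mul_sub_sum_sq (hp : ∑ a, p a = 1) (f : α → ℝ) :
    ∑ ω : ι → α, (∏ s, p (ω s)) * (Fintype.card ι * ∑ a, p a * f a - ∑ t, f (ω t)) ^ 2 =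
      Fintype.card ι * (∑ a, p a * f a ^ 2 - (∑ a, p a * f a) ^ 2) := by
  set μ := ∑ a, p a * f a
  have hmean : ∑ a, p a * (f a - μ) = 0 := by
    simp [mul_sub, Finset.sum_sub_distrib, ← Finset.sum_mul, hp, μ]
  have hcenter (ω : ι → α) :
      (Fintype.card ι * μ - ∑ t, f (ω t)) ^ 2 = (∑ t, (f (ω t) - μ)) ^ 2 := by
    simp only [Finset.sum_sub_distrib, Finset.sum_const, Finset.card_univ, nsmul_eq_mul]
    ring
  have hvar : ∑ a, p a * (f a - μ) ^ 2 = ∑ a, p a * f a ^ 2 - μ ^ 2 := by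
    have hexpand (a : α) :
        p a * (f a - μ) ^ 2 = p a * f a ^ 2 - 2 * μ * (p a * f a) + μ ^ 2 * p a := by ring
    rw [Finset.sum_congr rfl fun a _ => hexpand a, Finset.sum_add_distrib, Finset.sum_sub_distrib,
      ← Finset.mul_sum, ← Finset.mul_sum, hp]
    ring
  simp_rw [hcenter, sum_prod_mul_sum_sq_of_sum_mul_eq_zero hp hmean, hvar]

lemma sum_prod_mul_frobSq_card_smul_sub_le {m n : Type*} [Fintype m] [Fintype n]
    (hp : ∑ a, p a = 1) (F : α → Matrix m n ℝ) :
    ∑ ω : ι → α, (∏ s, p (ω s)) *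
        frobSq ((Fintype.card ι : ℝ) • ∑ a, p a • F a - ∑ t, F (ω t)) ≤
      Fintype.card ι * ∑ a, p a * frobSq (F a) := by
  have hentry (ω : ι → α) (i : m) (j : n) :
      ((Fintype.card ι : ℝ) • ∑ a, p a • F a - ∑ t, F (ω t)) i j =
        Fintype.card ι * ∑ a, p a * F a i j - ∑ t, F (ω t) i j := by
    simp [Matrix.sum_apply]
  calc ∑ ω : ι → α, (∏ s, p (ω s)) *
          frobSq ((Fintype.card ι : ℝ) • ∑ a, p a • F a - ∑ t, F (ω t))
      = ∑ i, ∑ j, ∑ ω : ι → α, (∏ s, p (ω s)) *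
          (Fintype.card ι * ∑ a, p a * F a i j - ∑ t, F (ω t) i j) ^ 2 := by
        simp_rw [frobSq, hentry, Finset.mul_sum]
        rw [Finset.sum_comm]
        exact Finset.sum_congr rfl fun i _ => Finset.sum_comm
    _ ≤ ∑ i, ∑ j, Fintype.card ι * ∑ a, p a * F a i j ^ 2 := by
        gcongr with i _ j _
        rw [sum_prod_mul_card_mul_sub_sum_sq hp]
        gcongr
        exact sub_le_self _ (sq_nonneg _)
    _ = Fintype.card ι * ∑ a, p a * frobSq (F a) := by
        simp_rw [frobSq, Finset.mul_sum]
        symm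
        rw [Finset.sum_comm]
        exact Finset.sum_congr rfl fun i _ => Finset.sum_comm

end IidSampling

lemma mul_sum_filter_le_sum_mul {Ω : Type*} [Fintype Ω] {w X : Ω → ℝ} (hw : ∀ ω, 0 ≤ w ω)
    (hX : ∀ ω, 0 ≤ X ω) {c : ℝ} (P : Ω → Prop) [DecidablePred P] (hP : ∀ ω, P ω → c ≤ X ω) :
    c * ∑ ω ∈ univ.filter P, w ω ≤ ∑ ω, w ω * X ω :=
  calc c * ∑ ω ∈ univ.filter P, w ω = ∑ ω ∈ univ.filter P, w ω * c := by
        rw [Finset.mul_sum]; simp_rw [mul_comm c]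
    _ ≤ ∑ ω ∈ univ.filter P, w ω * X ω :=
        Finset.sum_le_sum fun ω hω => mul_le_mul_of_nonneg_left (hP ω (mem_filter.mp hω).2) (hw ω)
    _ ≤ ∑ ω, w ω * X ω :=
        Finset.sum_le_sum_of_subset_of_nonneg (filter_subset _ _) fun ω _ _ =>
          mul_nonneg (hw ω) (hX ω)

lemma one_sub_le_sum_filter_specNorm_le {Ω m n : Type*} [Fintype Ω] [Fintype m] [Fintype n]
    [DecidableEq n] {w : Ω → ℝ} (hw0 : ∀ ω, 0 ≤ w ω) (hw1 : ∑ ω, w ω = 1)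
    (M : Ω → Matrix m n ℝ) {ε δ : ℝ} (hε : 0 < ε) (hδ : 0 < δ)
    (hE : ∑ ω, w ω * frobSq (M ω) ≤ (ε * δ) ^ 2) :
    1 - δ ≤ ∑ ω ∈ univ.filter (fun ω => specNorm (M ω) ≤ ε), w ω := by
  set bad := ∑ ω ∈ univ.filter (fun ω => ¬ specNorm (M ω) ≤ ε), w ω
  have hsplit : ∑ ω ∈ univ.filter (fun ω => specNorm (M ω) ≤ ε), w ω + bad = 1 := by
    rw [sum_filter_add_sum_filter_not, hw1]
  have hgood : 0 ≤ ∑ ω ∈ univ.filter (fun ω => specNorm (M ω) ≤ ε), w ω :=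
    Finset.sum_nonneg fun ω _ => hw0 ω
  have hmarkov : ε ^ 2 * bad ≤ ε ^ 2 * δ ^ 2 := by
    refine (mul_sum_filter_le_sum_mul hw0 (fun ω => frobSq_nonneg (M ω)) _ fun ω hω => ?_).trans
      (mul_pow ε δ 2 ▸ hE)
    exact (pow_le_pow_left₀ hε.le (not_le.mp hω).le 2).trans (specNorm_sq_le_frobSq (M ω))
  have hbad : bad ≤ δ ^ 2 := le_of_mul_le_mul_left hmarkov (by positivity)
  -- `bad ≤ min 1 δ² ≤ δ`
  nlinarith

lemma sum_smul_inv_mul_smul {ι M : Type*} [Fintype ι] [AddCommGroup M] [Module ℝ M]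
    {p : ι → ℝ} {A : ι → M} (hA : ∀ i, p i = 0 → A i = 0) (c : ℝ) :
    ∑ i, p i • (c * p i)⁻¹ • A i = c⁻¹ • ∑ i, A i := by
  rw [Finset.smul_sum]
  refine Finset.sum_congr rfl fun i _ => ?_
  by_cases hpi : p i = 0
  · simp [hA i hpi]
  · rw [smul_smul, mul_inv, mul_left_comm, mul_inv_cancel₀ hpi, mul_one]

section BlockSampling
variable {m n : Type*} [Fintype m] [Fintype n] [DecidableEq n]

lemma frobSq_div_specNorm_sq_pos {A : Matrix m n ℝ} (hA : A ≠ 0) :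
    0 < frobSq A / specNorm A ^ 2 :=
  div_pos (frobSq_pos hA) (pow_pos (specNorm_pos hA) 2)

lemma mul_specNorm_sq_le_frobSq {A : Matrix m n ℝ} {c : ℝ}
    (hc : A ≠ 0 → c ≤ frobSq A / specNorm A ^ 2) : c * specNorm A ^ 2 ≤ frobSq A := by
  by_cases hA : A = 0
  · simp [hA, frobSq, specNorm_zero]
  · exact (le_div_iff₀ (pow_pos (specNorm_pos hA) 2)).mp (hc hA)

lemma frobSq_div_mul_frobSq_inv_smul_gram_le [DecidableEq m] (A : Matrix m n ℝ) {k : ℝ}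
    (hk : 0 < k) (g : ℝ) :
    frobSq A / k * frobSq ((g * (frobSq A / k))⁻¹ • (Aᵀ * A)) ≤ k / g ^ 2 * specNorm A ^ 2 := by
  by_cases hA : A = 0
  · simp [hA, frobSq, specNorm_zero]
  have hF := frobSq_pos hA
  have hgram := frobSq_mul_le Aᵀ A
  rw [specNorm_transpose] at hgram
  rw [frobSq_smul]
  calc frobSq A / k * ((g * (frobSq A / k))⁻¹ ^ 2 * frobSq (Aᵀ * A))
      ≤ frobSq A / k * ((g * (frobSq A / k))⁻¹ ^ 2 * (specNorm A ^ 2 * frobSq A)) := by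
        gcongr
    _ = k / g ^ 2 * specNorm A ^ 2 := by
        field_simp

variable {ι : Type*} {m : ι → Type*} [∀ i, Fintype (m i)]
  {A : (i : ι) → Matrix (m i) n ℝ}

lemma sum_frobSq_eq_card_of_sum_transpose_mul_self_eq_one [Fintype ι] (h : ∑ i, (A i)ᵀ * A i = 1) :
    ∑ i, frobSq (A i) = Fintype.card n := by
  simp [frobSq_eq_trace, ← Matrix.trace_sum, h]

lemma inf'_frobSq_div_specNorm_sq_pos {s : Finset ι} (hs : ∀ i ∈ s, A i ≠ 0) (hne : s.Nonempty) :
    0 < s.inf' hne fun i => frobSq (A i) / specNorm (A i) ^ 2 :=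
  (Finset.lt_inf'_iff hne).mpr fun i hi => frobSq_div_specNorm_sq_pos (hs i hi)

lemma inf'_frobSq_div_specNorm_sq_mul_sum_le [Fintype ι]
    (hne : (univ.filter fun i => A i ≠ 0).Nonempty) :
    (univ.filter fun i => A i ≠ 0).inf' hne (fun i => frobSq (A i) / specNorm (A i) ^ 2) *
        ∑ i, specNorm (A i) ^ 2 ≤ ∑ i, frobSq (A i) := by
  rw [Finset.mul_sum]
  exact Finset.sum_le_sum fun i _ => mul_specNorm_sq_le_frobSq fun hi =>
    Finset.inf'_le _ (mem_filter.mpr ⟨mem_univ i, hi⟩)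

end BlockSampling

theorem block_sampled_gram_concentration_general (k G g : ℕ) (hg : 0 < g) (hk : 0 < k)
    (s : Fin G → ℕ)
    (Vblk : (i : Fin G) → Matrix (Fin (s i)) (Fin k) ℝ)
    (horth : (1 : Matrix (Fin k) (Fin k) ℝ) = ∑ i : Fin G, (Vblk i)ᵀ * Vblk i)
    (pr : Fin G → ℝ) (hp : ∀ i, pr i = frobSq (Vblk i) / k)
    (hne : (Finset.univ.filter (fun i : Fin G => Vblk i ≠ 0)).Nonempty)
    (α : ℝ)
    (hα : α = (Finset.univ.filter (fun i : Fin G => Vblk i ≠ 0)).inf' hne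
        (fun i => frobSq (Vblk i) / (specNorm (Vblk i))^2))
    (δ : ℝ) (hδ0 : 0 < δ) :
    1 - δ ≤ ∑ ω ∈ Finset.univ.filter (fun ω : Fin g → Fin G =>
        specNorm ((1 : Matrix (Fin k) (Fin k) ℝ)
            - ∑ t, ((g : ℝ) * pr (ω t))⁻¹ • ((Vblk (ω t))ᵀ * Vblk (ω t)))
          ≤ (k : ℝ) / (δ * Real.sqrt (α * (g : ℝ)))),
      ∏ t, pr (ω t) := by
  have hk' : (0 : ℝ) < k := Nat.cast_pos.mpr hk
  have hg' : (0 : ℝ) < g := Nat.cast_pos.mpr hg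
  have hmass : ∑ i, frobSq (Vblk i) = k := by
    simpa using sum_frobSq_eq_card_of_sum_transpose_mul_self_eq_one horth.symm
  have hpr1 : ∑ i, pr i = 1 := by simp [hp, ← Finset.sum_div, hmass, hk'.ne']
  have hαpos : 0 < α := hα ▸ inf'_frobSq_div_specNorm_sq_pos (fun i hi => (mem_filter.mp hi).2) hne
  have hspec : ∑ i, specNorm (Vblk i) ^ 2 ≤ k / α :=
    (le_div_iff₀' hαpos).mpr (hα ▸ hmass ▸ inf'_frobSq_div_specNorm_sq_mul_sum_le hne)
  set F : Fin G → Matrix (Fin k) (Fin k) ℝ := fun i => ((g : ℝ) * pr i)⁻¹ • ((Vblk i)ᵀ * Vblk i)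
  have hmean : (g : ℝ) • ∑ i, pr i • F i = 1 := by
    rw [sum_smul_inv_mul_smul (fun i hi => ?_), ← horth, smul_smul, mul_inv_cancel₀ hg'.ne',
      one_smul]
    rw [hp, div_eq_zero_iff, frobSq_eq_zero_iff] at hi
    simp [hi.resolve_right hk'.ne']
  have hE : ∑ ω : Fin g → Fin G, (∏ t, pr (ω t)) * frobSq (1 - ∑ t, F (ω t)) ≤
      k / g * ∑ i, specNorm (Vblk i) ^ 2 :=
    calc _ ≤ (g : ℝ) * ∑ i, pr i * frobSq (F i) := by
          simpa [hmean] using sum_prod_mul_frobSq_card_smul_sub_le (ι := Fin g) hpr1 F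
      _ ≤ g * ∑ i, k / g ^ 2 * specNorm (Vblk i) ^ 2 := by
          refine mul_le_mul_of_nonneg_left (Finset.sum_le_sum fun i _ => ?_) hg'.le
          simpa only [F, hp i] using frobSq_div_mul_frobSq_inv_smul_gram_le (Vblk i) hk' g
      _ = k / g * ∑ i, specNorm (Vblk i) ^ 2 := by
          rw [← Finset.mul_sum]; field_simp
  refine one_sub_le_sum_filter_specNorm_le (fun ω => prod_nonneg fun t _ => ?_)
    (sum_prod_eq_one hpr1) _ (by positivity) hδ0 (hE.trans ?_)
  · exact hp (ω t) ▸ div_nonneg (frobSq_nonneg _) hk'.le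
  · calc _ ≤ (k : ℝ) / g * (k / α) := by gcongr
      _ = _ := by
        field_simp
        rw [Real.sq_sqrt (by positivity)]

/-- Spectral concentration of the block-sampled Gram matrix. -/
theorem block_sampled_gram_concentration (n k G g : ℕ) (hg : 0 < g) (hk : 0 < k)
    (s : Fin G → ℕ)
    (Vblk : (i : Fin G) → Matrix (Fin (s i)) (Fin k) ℝ)
    (horth : (1 : Matrix (Fin k) (Fin k) ℝ) = ∑ i : Fin G, (Vblk i)ᵀ * Vblk i)
    (pr : Fin G → ℝ) (hp : ∀ i, pr i = frobSq (Vblk i) / k)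
    (hne : (Finset.univ.filter (fun i : Fin G => Vblk i ≠ 0)).Nonempty)
    (α : ℝ)
    (hα : α = (Finset.univ.filter (fun i : Fin G => Vblk i ≠ 0)).inf' hne
        (fun i => frobSq (Vblk i) / (specNorm (Vblk i))^2))
    (δ : ℝ) (hδ0 : 0 < δ) (hδ1 : δ < 1) :
    1 - δ ≤ ∑ ω ∈ Finset.univ.filter (fun ω : Fin g → Fin G =>
        specNorm ((1 : Matrix (Fin k) (Fin k) ℝ)
            - ∑ t, ((g : ℝ) * pr (ω t))⁻¹ • ((Vblk (ω t))ᵀ * Vblk (ω t)))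
          ≤ (k : ℝ) / (δ * Real.sqrt (α * (g : ℝ)))),
      ∏ t, pr (ω t) :=
  block_sampled_gram_concentration_general k G g hg hk s Vblk horth pr hp hne α hα δ hδ0
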